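/- Let I = (m₁, …, m_r) be a monomial ideal in S = k[x₁,…,x_m] and let T be its Taylor resolution, with basis u_J for subsets J ⊆ {1,…,r} and multidegrees m_J = lcm{m_j : j ∈ J}. The multiplication u_I · u_J = sgn(I,J) (m_I m_J / m_{I∪J}) u_{I∪J} when I ∩ J = ∅, and 0 otherwise, makes T a differential graded algebra; in particular the Leibniz rule d(u_I · u_J) = d(u_I)·u_J + (-1)^{|I|} u_I · d(u_J) holds. -/

import Mathlib

attribute [local instance] Classical.propDecidable

noncomputable section TaylorMorse

/-- The polynomial ring `S = k[x₁,…,xₘ]`. -/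
abbrev PolyS (k : Type) [Field k] (m : ℕ) := MvPolynomial (Fin m) k

/-- The underlying module of the Taylor resolution of a monomial ideal with `r`
generators: the free `S`-module on the subsets of `{1,…,r}`. -/
abbrev TaylorCx (k : Type) [Field k] (m r : ℕ) := Finset (Fin r) →₀ MvPolynomial (Fin m) k

variable {k : Type} [Field k] {m r : ℕ}

/-- The multidegree `m_J = lcm {m_j : j ∈ J}` of a subset of generators; a monomial
generator is recorded by its exponent vector `gen j : Fin m → ℕ`. -/
def mdeg (gen : Fin r → Fin m → ℕ) (J : Finset (Fin r)) : Fin m → ℕ :=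
  fun x => J.sup fun j => gen j x

/-- The monomial of `S` with exponent vector `v`. -/
def genMon (v : Fin m → ℕ) : MvPolynomial (Fin m) k :=
  MvPolynomial.monomial (Finsupp.equivFunOnFinite.symm v) 1

/-- The Taylor differential on a basis element:
`d(u_J) = Σᵢ (-1)^{i+1} (m_J/m_{J∖i}) u_{J∖i}`. -/
def taylorDElt (gen : Fin r → Fin m → ℕ) (J : Finset (Fin r)) : TaylorCx k m r :=
  ∑ i ∈ J, Finsupp.single (J.erase i)
    (((-1 : MvPolynomial (Fin m) k) ^ (J.filter fun j => j < i).card) *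
      genMon fun x => mdeg gen J x - mdeg gen (J.erase i) x)

/-- The Taylor differential, extended `S`-linearly. -/
def taylorD (gen : Fin r → Fin m → ℕ) :
    TaylorCx k m r →ₗ[PolyS k m] TaylorCx k m r :=
  Finsupp.lsum (PolyS k m) fun J =>
    LinearMap.toSpanSingleton (PolyS k m) (TaylorCx k m r) (taylorDElt gen J)

/-- The sign `sgn(I,J)` of the shuffle permutation making `I ∪ J` increasing. -/
def taylorSign (I J : Finset (Fin r)) : ℤ :=
  (-1) ^ ((I ×ˢ J).filter fun p => p.2 < p.1).card

/-- The Taylor product on basis elements: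
`u_I · u_J = sgn(I,J) (m_I m_J / m_{I∪J}) u_{I∪J}` if `I ∩ J = ∅`, and `0` otherwise. -/
def taylorMulElt (gen : Fin r → Fin m → ℕ) (I J : Finset (Fin r)) : TaylorCx k m r :=
  if Disjoint I J then
    Finsupp.single (I ∪ J)
      (((taylorSign I J : ℤ) : MvPolynomial (Fin m) k) *
        genMon fun x => mdeg gen I x + mdeg gen J x - mdeg gen (I ∪ J) x)
  else 0

/-- The Taylor product, extended `S`-bilinearly. -/
def taylorMul (gen : Fin r → Fin m → ℕ) :
    TaylorCx k m r →ₗ[PolyS k m] TaylorCx k m r →ₗ[PolyS k m] TaylorCx k m r :=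
  Finsupp.lsum (PolyS k m) fun I =>
    LinearMap.toSpanSingleton (PolyS k m) (TaylorCx k m r →ₗ[PolyS k m] TaylorCx k m r)
      (Finsupp.lsum (PolyS k m) fun J =>
        LinearMap.toSpanSingleton (PolyS k m) (TaylorCx k m r) (taylorMulElt gen I J))

/-- An element of the Taylor complex lies in `(x₁,…,xₘ)·T` iff all its coefficients have
vanishing constant term. -/
def InMaxIdeal (t : TaylorCx k m r) : Prop :=
  ∀ J, MvPolynomial.coeff 0 (t J) = 0

/-- The monomial ideal `I = (m₁,…,m_r)` generated by the given exponent vectors. -/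
def monIdeal (k : Type) [Field k] {m r : ℕ} (gen : Fin r → Fin m → ℕ) :
    Ideal (PolyS k m) :=
  Ideal.span (Set.range fun j => (genMon (gen j) : PolyS k m))

/-- One step of the modified Morse graph `G_T^ℳ`: either an arrow of `G_T` (a facet
relation) not in the matching, or the reversal of a matched arrow. -/
def morseStep (E : Finset (Finset (Fin r) × Finset (Fin r)))
    (u v : Finset (Fin r)) : Prop :=
  ((∃ i ∈ u, v = u.erase i) ∧ (u, v) ∉ E) ∨ (v, u) ∈ E

/-- A Morse matching on the Taylor resolution of the monomial ideal with generators
`gen`: a partial matching of the edges of `G_T` whose matched differential components are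
isomorphisms (equivalently `m_u = m_v`), such that reversing the matched edges creates no
directed cycle. -/
structure MorseMatching (gen : Fin r → Fin m → ℕ) : Type where
  edges : Finset (Finset (Fin r) × Finset (Fin r))
  isEdge : ∀ e ∈ edges, ∃ i ∈ e.1, e.2 = e.1.erase i
  disjointEdges : ∀ e ∈ edges, ∀ e' ∈ edges, e ≠ e' →
    e.1 ≠ e'.1 ∧ e.1 ≠ e'.2 ∧ e.2 ≠ e'.1 ∧ e.2 ≠ e'.2
  invertible : ∀ e ∈ edges, mdeg gen e.1 = mdeg gen e.2
  acyclic : ∀ J, ¬ Relation.TransGen (morseStep edges) J J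

variable {gen : Fin r → Fin m → ℕ}

/-- A cell is `ℳ`-critical if it is not matched. -/
def IsCritical (M : MorseMatching gen) (J : Finset (Fin r)) : Prop :=
  ∀ e ∈ M.edges, J ≠ e.1 ∧ J ≠ e.2

/-- A Morse matching is maximal if no Morse matching properly contains it. -/
def IsMaximalMatching (M : MorseMatching gen) : Prop :=
  ∀ M' : MorseMatching gen, M.edges ⊆ M'.edges → M'.edges = M.edges

/-- The splitting homotopy associated to a Morse matching, characterized by its
properties: it is a splitting homotopy (`φ² = 0`, `φdφ = φ`), it vanishes on cells that
are not targets of matched arrows, and on the target of a matched arrow `u → v` it has an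
invertible (constant) component at `u`. -/
structure IsAdaptedHomotopy (M : MorseMatching gen)
    (φ : TaylorCx k m r →ₗ[PolyS k m] TaylorCx k m r) : Prop where
  sq : φ ∘ₗ φ = 0
  pdp : φ ∘ₗ taylorD gen ∘ₗ φ = φ
  vanish : ∀ J : Finset (Fin r), (∀ e ∈ M.edges, J ≠ e.2) → φ (Finsupp.single J 1) = 0
  matched : ∀ e ∈ M.edges, ∃ c : k, c ≠ 0 ∧
    (φ (Finsupp.single e.2 1)) e.1 = MvPolynomial.C c

/-- The projection `q` on the span of the critical cells. -/
def qproj (M : MorseMatching gen) :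
    TaylorCx k m r →ₗ[PolyS k m] TaylorCx k m r :=
  Finsupp.lsum (PolyS k m) fun J =>
    if IsCritical M J then
      LinearMap.toSpanSingleton (PolyS k m) (TaylorCx k m r) (Finsupp.single J 1)
    else 0

/-- The Morse differential `d̃ = q ∘ (d - dφd)` on the critical cells. -/
def tilded (M : MorseMatching gen)
    (φ : TaylorCx k m r →ₗ[PolyS k m] TaylorCx k m r) :
    TaylorCx k m r →ₗ[PolyS k m] TaylorCx k m r :=
  qproj M ∘ₗ (taylorD gen - taylorD gen ∘ₗ φ ∘ₗ taylorD gen)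

/-- The idempotent `p = 1 - dφ - φd`. -/
def pmap (gen : Fin r → Fin m → ℕ)
    (φ : TaylorCx k m r →ₗ[PolyS k m] TaylorCx k m r) :
    TaylorCx k m r →ₗ[PolyS k m] TaylorCx k m r :=
  LinearMap.id - taylorD gen ∘ₗ φ - φ ∘ₗ taylorD gen

/-- Auxiliary: apply `φ` except in arity one, where `φλ₁` is replaced by the identity
(the inclusion). -/
def phiOr (φ : TaylorCx k m r →ₗ[PolyS k m] TaylorCx k m r) (s : ℕ)
    (x : TaylorCx k m r) : TaylorCx k m r :=
  if s = 1 then x else φ x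

/-- Merkulov's auxiliary maps `λₙ` for the Taylor dga and the homotopy `φ`:
`λ₁ = id`, `λ₂` is the Taylor multiplication, and
`λₙ = Σ_{s+t=n, s,t ≥ 1} (-1)^{s+1} λ₂(φλ_s, φλ_t)` with the convention `φλ₁ = id`. -/
def lam (gen : Fin r → Fin m → ℕ)
    (φ : TaylorCx k m r →ₗ[PolyS k m] TaylorCx k m r) :
    (n : ℕ) → (Fin n → TaylorCx k m r) → TaylorCx k m r
  | 0, _ => 0
  | 1, v => v 0
  | (n+2), v =>
    ∑ s ∈ (Finset.Ico 1 (n+2)).attach,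
      ((-1 : ℤ) ^ ((s : ℕ) + 1)) •
        taylorMul gen
          (phiOr φ (s : ℕ) (lam gen φ (s : ℕ) fun i =>
            v ⟨i, by have hs := Finset.mem_Ico.mp s.2; have hi := i.isLt; omega⟩))
          (phiOr φ (n + 2 - (s : ℕ)) (lam gen φ (n + 2 - (s : ℕ)) fun i =>
            v ⟨(s : ℕ) + i, by have hs := Finset.mem_Ico.mp s.2; have hi := i.isLt; omega⟩))
  termination_by n => n
  decreasing_by
  · have := Finset.mem_Ico.mp s.2; omega
  · have := Finset.mem_Ico.mp s.2; omega

/-- The relation generating the equivalence whose classes are counted by `cl`. -/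
def clRel (gen : Fin r → Fin m → ℕ) (J : Finset (Fin r)) (a b : Fin r) : Prop :=
  a ∈ J ∧ b ∈ J ∧ ∃ x, gen a x ≠ 0 ∧ gen b x ≠ 0

/-- `cl u`: the number of equivalence classes of the generators occurring in `u` under
the transitive closure of the non-coprimality relation. -/
def cl (gen : Fin r → Fin m → ℕ) (J : Finset (Fin r)) : ℕ :=
  (J.image fun a => J.filter fun b => Relation.ReflTransGen (clRel gen J) a b).card

/-- The complex `T ⊗_S k` computing `Tor^S(S/I, k)`: the free `k`-module on the subsets
of the generators. -/
abbrev TorCx (k : Type) [Field k] (r : ℕ) := Finset (Fin r) →₀ k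

/-- The reduced Taylor differential on `T ⊗_S k` (only components with unit coefficient,
i.e. with `m_J = m_{J∖i}`, survive). -/
def dkElt (gen : Fin r → Fin m → ℕ) (J : Finset (Fin r)) : TorCx k r :=
  ∑ i ∈ J, if mdeg gen J = mdeg gen (J.erase i) then
    Finsupp.single (J.erase i) ((-1 : k) ^ (J.filter fun j => j < i).card)
  else 0

/-- The differential of `T ⊗_S k`. -/
def dk (gen : Fin r → Fin m → ℕ) : TorCx k r →ₗ[k] TorCx k r :=
  Finsupp.lsum k fun J => LinearMap.toSpanSingleton k (TorCx k r) (dkElt gen J)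

/-- The reduced Taylor product on `T ⊗_S k` (basis elements). -/
def mulkElt (gen : Fin r → Fin m → ℕ) (I J : Finset (Fin r)) : TorCx k r :=
  if Disjoint I J ∧ (∀ x, mdeg gen I x + mdeg gen J x = mdeg gen (I ∪ J) x) then
    Finsupp.single (I ∪ J) ((taylorSign I J : ℤ) : k)
  else 0

/-- The product of the dga `T ⊗_S k`. -/
def mulk (gen : Fin r → Fin m → ℕ) : TorCx k r →ₗ[k] TorCx k r →ₗ[k] TorCx k r :=
  Finsupp.lsum k fun I =>
    LinearMap.toSpanSingleton k (TorCx k r →ₗ[k] TorCx k r)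
      (Finsupp.lsum k fun J => LinearMap.toSpanSingleton k (TorCx k r) (mulkElt gen I J))

/-- A defining system for the length-`n` Massey product of the cycles `α 0, …, α (n-1)`
in the dga `T ⊗_S k`. -/
structure DefiningSystem (k : Type) [Field k] {m r : ℕ} (gen : Fin r → Fin m → ℕ)
    (n : ℕ) (α : Fin n → TorCx k r) : Type where
  a : ∀ i j : Fin (n+1), i < j → TorCx k r
  deg : Fin (n+1) → Fin (n+1) → ℕ
  homog : ∀ i j (h : i < j), ∀ J ∈ (a i j h).support, J.card = deg i j
  init : ∀ i : Fin n, a i.castSucc i.succ Fin.castSucc_lt_succ = α i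
  compat : ∀ i j (h : i < j),
    dk gen (a i j h) = ∑ c ∈ (Finset.Ioo i j).attach,
      ((-1 : k) ^ (deg i c + 1)) •
        mulk gen (a i c (Finset.mem_Ioo.mp c.2).1) (a c j (Finset.mem_Ioo.mp c.2).2)

/-- The value `Σ_{0<c<n} ā_{0c} a_{cn}` of the Massey product on a defining system. -/
def masseyValue {k : Type} [Field k] {m r : ℕ} {gen : Fin r → Fin m → ℕ}
    {n : ℕ} {α : Fin n → TorCx k r} (D : DefiningSystem k gen n α) : TorCx k r :=
  ∑ c ∈ (Finset.Ioo (0 : Fin (n+1)) (Fin.last n)).attach,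
    ((-1 : k) ^ (D.deg 0 c + 1)) •
      mulk gen (D.a 0 c (Finset.mem_Ioo.mp c.2).1)
        (D.a c (Fin.last n) (Finset.mem_Ioo.mp c.2).2)

/-- The length-`n` Massey product of `α` is trivial: if it is defined (a defining system
exists) then it contains zero (some defining system has boundary value). -/
def MasseyTrivial (k : Type) [Field k] {m r : ℕ} (gen : Fin r → Fin m → ℕ)
    (n : ℕ) (α : Fin n → TorCx k r) : Prop :=
  Nonempty (DefiningSystem k gen n α) →
    ∃ D : DefiningSystem k gen n α, ∃ z : TorCx k r, dk gen z = masseyValue D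

/-- `R = S/I` is Golod: all Massey products on `Tor^S(R,k)` (on homogeneous cycles of
positive homological degree) are trivial. -/
def IsGolod (k : Type) [Field k] {m r : ℕ} (gen : Fin r → Fin m → ℕ) : Prop :=
  ∀ n : ℕ, 2 ≤ n → ∀ α : Fin n → TorCx k r,
    (∀ i, dk gen (α i) = 0) → (∀ i, (α i) ∅ = 0) → MasseyTrivial k gen n α

/-- The product on `Tor^S(R,k)` is trivial: the product of any two positive-degree
cycles is a boundary. -/
def ProductTrivial (k : Type) [Field k] {m r : ℕ} (gen : Fin r → Fin m → ℕ) : Prop :=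
  ∀ a b : TorCx k r, dk gen a = 0 → dk gen b = 0 → a ∅ = 0 → b ∅ = 0 →
    ∃ z : TorCx k r, dk gen z = mulk gen a b

/-- `t` is supported on the simplicial complex `Δ`. -/
def SupportedOn (Δ : Set (Finset (Fin r))) (t : TaylorCx k m r) : Prop :=
  ∀ J, t J ≠ 0 → J ∈ Δ

/-- `F_Δ` (the subcomplex of the Taylor complex spanned by the faces of `Δ`) is a minimal
free resolution of `S/I`: `Δ` is a simplicial complex containing all vertices, the
subcomplex is exact in positive degrees, its cokernel in degree 0 is `S/I`, and its
differential is minimal. -/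
def IsSimplicialMinimalResolution (gen : Fin r → Fin m → ℕ)
    (Δ : Set (Finset (Fin r))) : Prop :=
  (∀ J ∈ Δ, ∀ K, K ⊆ J → K ∈ Δ) ∧
  (∅ ∈ Δ) ∧ (∀ j : Fin r, {j} ∈ Δ) ∧
  (∀ t : TaylorCx k m r, SupportedOn Δ t → taylorD gen t = 0 → t ∅ = 0 →
    ∃ s : TaylorCx k m r, SupportedOn Δ s ∧ taylorD gen s = t) ∧
  (∀ p : PolyS k m, p ∈ monIdeal k gen ↔
    ∃ s : TaylorCx k m r, SupportedOn Δ s ∧ taylorD gen s = Finsupp.single ∅ p) ∧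
  (∀ J ∈ Δ, InMaxIdeal (taylorD (k := k) gen (Finsupp.single J 1)))

/-- `R = S/I` is simplicially resolvable: its minimal free resolution is a simplicial
resolution in the sense of Bayer–Peeva–Sturmfels. -/
def SimpliciallyResolvable (k : Type) [Field k] {m r : ℕ}
    (gen : Fin r → Fin m → ℕ) : Prop :=
  ∃ Δ : Set (Finset (Fin r)), IsSimplicialMinimalResolution (k := k) gen Δ

/-!
Every structure constant of `T` is a signed monomial `±x^u`, and products of signed monomials
are signed monomials, so each identity between basis elements reduces to a congruence mod 2
between sign exponents and a pointwise identity between exponent vectors, where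
`m_{I ∪ J} = max m_I m_J`. The sign `sgn(I,J)` is `(-1)` to the number of inversions of the pair
`(I, J)`, which is additive under disjoint unions in either argument; this gives associativity and,
via `inv(I, J) = inv(I ∖ i, J) + #{j ∈ J | j < i}`, the signs in the Leibniz rule. When
`I ∩ J ≠ ∅` the product `u_I u_J` is zero, and on the right-hand side of the Leibniz rule only the
two terms removing a common element `i` survive: they cancel if `I ∩ J = {i}` and vanish
otherwise.
-/

lemma card_filter_union {α : Type*} [DecidableEq α] {s t : Finset α} (h : Disjoint s t)
    (p : α → Prop) [DecidablePred p] :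
    ((s ∪ t).filter p).card = (s.filter p).card + (t.filter p).card := by
  rw [Finset.filter_union, Finset.card_union_of_disjoint (Finset.disjoint_filter_filter h)]

section Inversions

variable {α : Type*} [LT α] [DecidableLT α]

def inversions (s t : Finset α) : ℕ :=
  ((s ×ˢ t).filter fun p => p.2 < p.1).card

lemma inversions_singleton_left (a : α) (t : Finset α) :
    inversions {a} t = (t.filter (· < a)).card := by
  simp [inversions, Finset.filter_map]

lemma inversions_singleton_right (s : Finset α) (b : α) :
    inversions s {b} = (s.filter (b < ·)).card := by
  simp [inversions, Finset.filter_map]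

variable [DecidableEq α]

lemma inversions_union_left {s s' : Finset α} (t : Finset α) (h : Disjoint s s') :
    inversions (s ∪ s') t = inversions s t + inversions s' t := by
  rw [inversions, Finset.union_product, Finset.filter_union, Finset.card_union_of_disjoint]
  · rfl
  · exact Finset.disjoint_filter_filter (Finset.disjoint_product.mpr (Or.inl h))

lemma inversions_union_right (s : Finset α) {t t' : Finset α} (h : Disjoint t t') :
    inversions s (t ∪ t') = inversions s t + inversions s t' := by
  rw [inversions, Finset.product_union, Finset.filter_union, Finset.card_union_of_disjoint]
  · rfl
  · exact Finset.disjoint_filter_filter (Finset.disjoint_product.mpr (Or.inr h))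

lemma inversions_eq_erase_left {s : Finset α} {a : α} (t : Finset α) (ha : a ∈ s) :
    inversions s t = inversions (s.erase a) t + (t.filter (· < a)).card := by
  have h := inversions_union_left t (Finset.disjoint_singleton_left.mpr (Finset.notMem_erase a s))
  rwa [← Finset.insert_eq, Finset.insert_erase ha, inversions_singleton_left, add_comm] at h

lemma inversions_eq_erase_right (s : Finset α) {t : Finset α} {b : α} (hb : b ∈ t) :
    inversions s t = inversions s (t.erase b) + (s.filter (b < ·)).card := by
  have h := inversions_union_right s (Finset.disjoint_singleton_left.mpr (Finset.notMem_erase b t))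
  rwa [← Finset.insert_eq, Finset.insert_erase hb, inversions_singleton_right, add_comm] at h

end Inversions

-- The separate `DecidableLT` instance lets the lemma match filters decided classically.
lemma card_filter_lt_add_card_filter_gt {α : Type*} [LinearOrder α] [DecidableLT α]
    [DecidableEq α] (s : Finset α) (a : α) :
    (s.filter (· < a)).card + (s.filter (a < ·)).card = (s.erase a).card := by
  rw [← Finset.card_filter_add_card_filter_not (s := s.erase a) (p := (· < a))]
  congr 2 <;> ext x <;> simp only [Finset.mem_filter, Finset.mem_erase, not_lt] <;> grind

section TaylorAlgebra

open Finsupp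

lemma taylorSign_eq (I J : Finset (Fin r)) : taylorSign I J = (-1) ^ inversions I J := by
  unfold taylorSign inversions
  congr 2

variable (gen) in
lemma mdeg_union (I J : Finset (Fin r)) (x : Fin m) :
    mdeg gen (I ∪ J) x = max (mdeg gen I x) (mdeg gen J x) :=
  Finset.sup_union

variable (gen) in
lemma mdeg_eq_max_erase {I : Finset (Fin r)} {i : Fin r} (hi : i ∈ I) (x : Fin m) :
    mdeg gen I x = max (gen i x) (mdeg gen (I.erase i) x) := by
  conv_lhs => rw [← Finset.insert_erase hi]
  exact Finset.sup_insert

lemma genMon_add (u v : Fin m → ℕ) :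
    (genMon (fun x => u x + v x) : PolyS k m) = genMon u * genMon v := by
  have : equivFunOnFinite.symm (fun x => u x + v x) =
      equivFunOnFinite.symm u + equivFunOnFinite.symm v := by
    ext; simp
  simp only [genMon, MvPolynomial.monomial_mul, one_mul, this]

lemma genMon_zero : (genMon (fun _ => 0) : PolyS k m) = 1 := by
  have : equivFunOnFinite.symm (fun _ => 0 : Fin m → ℕ) = 0 := by
    ext; simp
  simp [genMon, this]

variable (k) in
def signedMonomial (a : ℕ) (u : Fin m → ℕ) : PolyS k m :=
  (-1) ^ a * genMon u

lemma signedMonomial_mul (a b : ℕ) (u v : Fin m → ℕ) :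
    signedMonomial k a u * signedMonomial k b v = signedMonomial k (a + b) fun x => u x + v x := by
  rw [signedMonomial, signedMonomial, signedMonomial, mul_mul_mul_comm, ← pow_add, genMon_add]

lemma neg_one_pow_mul_signedMonomial (n a : ℕ) (u : Fin m → ℕ) :
    (-1) ^ n * signedMonomial k a u = signedMonomial k (n + a) u := by
  rw [signedMonomial, signedMonomial, ← mul_assoc, ← pow_add]

lemma signedMonomial_congr {a b : ℕ} {u v : Fin m → ℕ} (h : a % 2 = b % 2)
    (h' : ∀ x, u x = v x) :
    signedMonomial k a u = signedMonomial k b v := by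
  rw [signedMonomial, signedMonomial, funext h', neg_one_pow_eq_pow_mod_two, h,
    ← neg_one_pow_eq_pow_mod_two]

lemma signedMonomial_add_eq_zero {a b : ℕ} {u v : Fin m → ℕ} (h : (a + b) % 2 = 1)
    (h' : ∀ x, u x = v x) :
    signedMonomial k a u + signedMonomial k b v = 0 := by
  rw [signedMonomial_congr (b := a + 1) (v := u) (by omega) fun x => (h' x).symm,
    signedMonomial, signedMonomial, pow_succ]
  ring

variable (gen) in
def taylorDCoeff (J : Finset (Fin r)) (i : Fin r) : PolyS k m :=
  signedMonomial k (J.filter (· < i)).card fun x => mdeg gen J x - mdeg gen (J.erase i) x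

variable (gen) in
def taylorMulCoeff (I J : Finset (Fin r)) : PolyS k m :=
  signedMonomial k (inversions I J) fun x => mdeg gen I x + mdeg gen J x - mdeg gen (I ∪ J) x

lemma taylorDElt_eq (J : Finset (Fin r)) :
    (taylorDElt gen J : TaylorCx k m r) = ∑ i ∈ J, single (J.erase i) (taylorDCoeff gen J i) :=
  rfl

lemma taylorMulElt_of_disjoint {I J : Finset (Fin r)} (h : Disjoint I J) :
    (taylorMulElt gen I J : TaylorCx k m r) = single (I ∪ J) (taylorMulCoeff gen I J) := by
  rw [taylorMulElt, if_pos h, taylorSign_eq, taylorMulCoeff, signedMonomial]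
  push_cast
  rfl

lemma taylorMulElt_of_not_disjoint {I J : Finset (Fin r)} (h : ¬Disjoint I J) :
    (taylorMulElt gen I J : TaylorCx k m r) = 0 :=
  if_neg h

lemma taylorMul_single_single (I J : Finset (Fin r)) (p q : PolyS k m) :
    taylorMul gen (single I p) (single J q) = (p * q) • taylorMulElt gen I J := by
  simp only [taylorMul, lsum_single, LinearMap.toSpanSingleton_apply, LinearMap.smul_apply,
    smul_smul]

lemma taylorD_single (J : Finset (Fin r)) (p : PolyS k m) :
    taylorD gen (single J p) = p • taylorDElt gen J := by
  simp only [taylorD, lsum_single, LinearMap.toSpanSingleton_apply]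

lemma taylorMulCoeff_assoc {I J K : Finset (Fin r)} (hIJ : Disjoint I J) (hJK : Disjoint J K) :
    taylorMulCoeff gen I J * taylorMulCoeff gen (I ∪ J) K =
      (taylorMulCoeff gen J K * taylorMulCoeff gen I (J ∪ K) : PolyS k m) := by
  rw [taylorMulCoeff, taylorMulCoeff, taylorMulCoeff, taylorMulCoeff, signedMonomial_mul,
    signedMonomial_mul]
  refine signedMonomial_congr ?_ fun x => ?_
  · have := inversions_union_left K hIJ
    have := inversions_union_right I hJK
    omega
  · have := mdeg_union gen I J x
    have := mdeg_union gen J K x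
    have := mdeg_union gen (I ∪ J) K x
    have := mdeg_union gen I (J ∪ K) x
    rw [Finset.union_assoc] at *
    omega

lemma taylorMulCoeff_mul_taylorDCoeff_of_mem_left {I J : Finset (Fin r)} {i : Fin r}
    (h : Disjoint I J) (hi : i ∈ I) :
    taylorMulCoeff gen I J * taylorDCoeff gen (I ∪ J) i =
      (taylorDCoeff gen I i * taylorMulCoeff gen (I.erase i) J : PolyS k m) := by
  have hiJ : i ∉ J := Finset.disjoint_left.mp h hi
  rw [taylorMulCoeff, taylorMulCoeff, taylorDCoeff, taylorDCoeff, signedMonomial_mul,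
    signedMonomial_mul, Finset.erase_union_distrib, Finset.erase_eq_of_notMem hiJ]
  refine signedMonomial_congr ?_ fun x => ?_
  · rw [inversions_eq_erase_left J hi, card_filter_union h]
    omega
  · have := mdeg_union gen I J x
    have := mdeg_union gen (I.erase i) J x
    have := mdeg_eq_max_erase gen hi x
    omega

lemma taylorMulCoeff_mul_taylorDCoeff_of_mem_right {I J : Finset (Fin r)} {j : Fin r}
    (h : Disjoint I J) (hj : j ∈ J) :
    taylorMulCoeff gen I J * taylorDCoeff gen (I ∪ J) j =
      (-1) ^ I.card * (taylorDCoeff gen J j * taylorMulCoeff gen I (J.erase j) : PolyS k m) := by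
  have hjI : j ∉ I := Finset.disjoint_right.mp h hj
  rw [taylorMulCoeff, taylorMulCoeff, taylorDCoeff, taylorDCoeff, signedMonomial_mul,
    signedMonomial_mul, neg_one_pow_mul_signedMonomial, Finset.erase_union_distrib,
    Finset.erase_eq_of_notMem hjI]
  refine signedMonomial_congr ?_ fun x => ?_
  · have := card_filter_lt_add_card_filter_gt I j
    rw [Finset.erase_eq_of_notMem hjI] at this
    rw [inversions_eq_erase_right I hj, card_filter_union h]
    omega
  · have := mdeg_union gen I J x
    have := mdeg_union gen I (J.erase j) x
    have := mdeg_eq_max_erase gen hj x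
    omega

lemma taylorDCoeff_mul_taylorMulCoeff_cancel {I J : Finset (Fin r)} {i : Fin r}
    (hiI : i ∈ I) (hiJ : i ∈ J) :
    taylorDCoeff gen I i * taylorMulCoeff gen (I.erase i) J +
      (-1) ^ I.card * (taylorDCoeff gen J i * taylorMulCoeff gen I (J.erase i)) =
      (0 : PolyS k m) := by
  rw [taylorMulCoeff, taylorMulCoeff, taylorDCoeff, taylorDCoeff, signedMonomial_mul,
    signedMonomial_mul, neg_one_pow_mul_signedMonomial, Finset.erase_union_of_mem hiJ,
    Finset.union_erase_of_mem hiI]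
  refine signedMonomial_add_eq_zero ?_ fun x => ?_
  · have := card_filter_lt_add_card_filter_gt I i
    have := Finset.card_erase_of_mem hiI
    have := Finset.card_pos.mpr ⟨i, hiI⟩
    have := inversions_eq_erase_left J hiI
    have := inversions_eq_erase_right I hiJ
    omega
  · have := mdeg_union gen I J x
    have := mdeg_eq_max_erase gen hiI x
    have := mdeg_eq_max_erase gen hiJ x
    omega

lemma taylorMulCoeff_empty_left (J : Finset (Fin r)) :
    (taylorMulCoeff gen ∅ J : PolyS k m) = 1 := by
  simp [taylorMulCoeff, inversions, mdeg, signedMonomial, genMon_zero]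

lemma taylorMulCoeff_empty_right (I : Finset (Fin r)) :
    (taylorMulCoeff gen I ∅ : PolyS k m) = 1 := by
  simp [taylorMulCoeff, inversions, mdeg, signedMonomial, genMon_zero]

lemma taylorMul_one_left (a : TaylorCx k m r) : taylorMul gen (single ∅ 1) a = a := by
  refine LinearMap.congr_fun (Finsupp.lhom_ext (ψ := LinearMap.id) fun J p => ?_) a
  rw [taylorMul_single_single, taylorMulElt_of_disjoint (Finset.disjoint_empty_left J),
    Finset.empty_union, taylorMulCoeff_empty_left, smul_single, smul_eq_mul, one_mul, mul_one,
    LinearMap.id_apply]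

lemma taylorMul_one_right (a : TaylorCx k m r) : taylorMul gen a (single ∅ 1) = a := by
  refine LinearMap.congr_fun (Finsupp.lhom_ext (φ := (taylorMul gen).flip (single ∅ 1))
    (ψ := LinearMap.id) fun I p => ?_) a
  rw [LinearMap.flip_apply, taylorMul_single_single, taylorMulElt_of_disjoint
    (Finset.disjoint_empty_right I), Finset.union_empty, taylorMulCoeff_empty_right, smul_single,
    smul_eq_mul, mul_one, mul_one, LinearMap.id_apply]

lemma taylorMulElt_assoc (I J K : Finset (Fin r)) :
    taylorMul gen (taylorMulElt gen I J) (single K 1) =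
      (taylorMul gen (single I 1) (taylorMulElt gen J K) : TaylorCx k m r) := by
  by_cases h : Disjoint I J ∧ Disjoint J K ∧ Disjoint I K
  · obtain ⟨hIJ, hJK, hIK⟩ := h
    rw [taylorMulElt_of_disjoint hIJ, taylorMulElt_of_disjoint hJK, taylorMul_single_single,
      taylorMul_single_single,
      taylorMulElt_of_disjoint (Finset.disjoint_union_left.mpr ⟨hIK, hJK⟩),
      taylorMulElt_of_disjoint (Finset.disjoint_union_right.mpr ⟨hIJ, hIK⟩), smul_single,
      smul_single, smul_eq_mul, smul_eq_mul, mul_one, one_mul, Finset.union_assoc,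
      taylorMulCoeff_assoc hIJ hJK]
  · have hL : taylorMul gen (taylorMulElt gen I J) (single K 1) = (0 : TaylorCx k m r) := by
      by_cases hIJ : Disjoint I J
      · rw [taylorMulElt_of_disjoint hIJ, taylorMul_single_single, taylorMulElt_of_not_disjoint,
          smul_zero]
        rw [Finset.disjoint_union_left]
        tauto
      · rw [taylorMulElt_of_not_disjoint hIJ, map_zero, LinearMap.zero_apply]
    have hR : taylorMul gen (single I 1) (taylorMulElt gen J K) = (0 : TaylorCx k m r) := by
      by_cases hJK : Disjoint J K
      · rw [taylorMulElt_of_disjoint hJK, taylorMul_single_single, taylorMulElt_of_not_disjoint,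
          smul_zero]
        rw [Finset.disjoint_union_right]
        tauto
      · rw [taylorMulElt_of_not_disjoint hJK, map_zero]
    rw [hL, hR]

lemma taylorMul_assoc (a b c : TaylorCx k m r) :
    taylorMul gen (taylorMul gen a b) c = taylorMul gen a (taylorMul gen b c) := by
  induction a using Finsupp.induction_linear with
  | zero => simp
  | add a a' ha ha' => simp only [map_add, LinearMap.add_apply, ha, ha']
  | single I p =>
    induction b using Finsupp.induction_linear with
    | zero => simp
    | add b b' hb hb' => simp only [map_add, LinearMap.add_apply, hb, hb']
    | single J q =>
      induction c using Finsupp.induction_linear with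
      | zero => simp
      | add c c' hc hc' => simp only [map_add, hc, hc']
      | single K s =>
        rw [taylorMul_single_single, taylorMul_single_single J K, ← smul_single_one K s,
          ← smul_single_one I p]
        simp only [map_smul, LinearMap.smul_apply, smul_smul, taylorMulElt_assoc]
        ring_nf

lemma taylorMul_taylorDElt_left (I J : Finset (Fin r)) :
    taylorMul gen (taylorDElt gen I : TaylorCx k m r) (single J 1) =
      ∑ i ∈ I, (taylorDCoeff gen I i : PolyS k m) • taylorMulElt gen (I.erase i) J := by
  simp only [taylorDElt_eq, map_sum, LinearMap.sum_apply, taylorMul_single_single, mul_one]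

lemma taylorMul_taylorDElt_right (I J : Finset (Fin r)) :
    taylorMul gen (single I 1) (taylorDElt gen J : TaylorCx k m r) =
      ∑ j ∈ J, (taylorDCoeff gen J j : PolyS k m) • taylorMulElt gen I (J.erase j) := by
  simp only [taylorDElt_eq, map_sum, taylorMul_single_single, one_mul]

lemma taylorD_taylorMulElt_of_disjoint {I J : Finset (Fin r)} (h : Disjoint I J) :
    taylorD gen (taylorMulElt gen I J : TaylorCx k m r) =
      taylorMul gen (taylorDElt gen I) (single J 1) +
        ((-1 : ℤ) ^ I.card) • taylorMul gen (single I 1) (taylorDElt gen J) := by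
  rw [taylorMul_taylorDElt_left, taylorMul_taylorDElt_right, taylorMulElt_of_disjoint h,
    taylorD_single, taylorDElt_eq, Finset.sum_union h, smul_add,
    Finset.smul_sum, Finset.smul_sum, Finset.smul_sum]
  refine congr_arg₂ (· + ·) (Finset.sum_congr rfl fun i hi => ?_)
    (Finset.sum_congr rfl fun i hi => ?_)
  · rw [taylorMulElt_of_disjoint (h.mono_left (Finset.erase_subset i I)), smul_single, smul_single,
      smul_eq_mul, smul_eq_mul, taylorMulCoeff_mul_taylorDCoeff_of_mem_left h hi,
      Finset.erase_union_distrib, Finset.erase_eq_of_notMem (Finset.disjoint_left.mp h hi)]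
  · rw [taylorMulElt_of_disjoint (h.mono_right (Finset.erase_subset i J)), smul_single,
      smul_single, smul_single, smul_eq_mul, smul_eq_mul, zsmul_eq_mul, Int.cast_pow, Int.cast_neg,
      Int.cast_one, taylorMulCoeff_mul_taylorDCoeff_of_mem_right h hi, Finset.erase_union_distrib,
      Finset.erase_eq_of_notMem (Finset.disjoint_right.mp h hi)]

lemma taylorMul_taylorDElt_add_eq_zero_of_not_disjoint {I J : Finset (Fin r)}
    (h : ¬Disjoint I J) :
    taylorMul gen (taylorDElt gen I : TaylorCx k m r) (single J 1) +
      ((-1 : ℤ) ^ I.card) • taylorMul gen (single I 1) (taylorDElt gen J) = 0 := by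
  rw [taylorMul_taylorDElt_left, taylorMul_taylorDElt_right]
  obtain ⟨i, hiI, hiJ⟩ := Finset.not_disjoint_iff.mp h
  rw [Finset.sum_eq_single_of_mem i hiI, Finset.sum_eq_single_of_mem i hiJ]
  · by_cases h' : Disjoint (I.erase i) J
    · rw [taylorMulElt_of_disjoint h',
        taylorMulElt_of_disjoint (Finset.disjoint_erase_comm.mp h'), Finset.erase_union_of_mem hiJ,
        Finset.union_erase_of_mem hiI, smul_single, smul_single, smul_single, ← single_add,
        smul_eq_mul, smul_eq_mul, zsmul_eq_mul, Int.cast_pow, Int.cast_neg, Int.cast_one,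
        taylorDCoeff_mul_taylorMulCoeff_cancel hiI hiJ, single_zero]
    · rw [taylorMulElt_of_not_disjoint h',
        taylorMulElt_of_not_disjoint (mt Finset.disjoint_erase_comm.mpr h'), smul_zero, smul_zero,
        smul_zero, add_zero]
  · intro j _ hji
    rw [taylorMulElt_of_not_disjoint, smul_zero]
    exact Finset.not_disjoint_iff.mpr ⟨i, hiI, Finset.mem_erase.mpr ⟨Ne.symm hji, hiJ⟩⟩
  · intro j _ hji
    rw [taylorMulElt_of_not_disjoint, smul_zero]
    exact Finset.not_disjoint_iff.mpr ⟨i, Finset.mem_erase.mpr ⟨Ne.symm hji, hiI⟩, hiJ⟩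

lemma taylorD_taylorMulElt (I J : Finset (Fin r)) :
    taylorD gen (taylorMulElt gen I J : TaylorCx k m r) =
      taylorMul gen (taylorDElt gen I) (single J 1) +
        ((-1 : ℤ) ^ I.card) • taylorMul gen (single I 1) (taylorDElt gen J) := by
  by_cases h : Disjoint I J
  · exact taylorD_taylorMulElt_of_disjoint h
  · rw [taylorMulElt_of_not_disjoint h, map_zero,
      taylorMul_taylorDElt_add_eq_zero_of_not_disjoint h]

end TaylorAlgebra

theorem taylor_resolution_is_dga
    (k : Type) [Field k] {m r : ℕ} (gen : Fin r → Fin m → ℕ) :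
    -- associativity
    (∀ a b c : TaylorCx k m r,
      taylorMul gen (taylorMul gen a b) c = taylorMul gen a (taylorMul gen b c)) ∧
    -- `u_∅` is a unit
    (∀ a : TaylorCx k m r,
      taylorMul gen (Finsupp.single ∅ 1) a = a ∧ taylorMul gen a (Finsupp.single ∅ 1) = a) ∧
    -- Leibniz rule (on basis elements, hence everywhere by bilinearity)
    (∀ I J : Finset (Fin r),
      taylorD (k := k) gen (taylorMul gen (Finsupp.single I 1) (Finsupp.single J 1)) =
        taylorMul gen (taylorD gen (Finsupp.single I 1)) (Finsupp.single J 1) +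
        ((-1 : ℤ) ^ I.card) •
          taylorMul gen (Finsupp.single I 1) (taylorD gen (Finsupp.single J 1))) := by
  refine ⟨taylorMul_assoc, fun a => ⟨taylorMul_one_left a, taylorMul_one_right a⟩,
    fun I J => ?_⟩
  rw [taylorMul_single_single, one_mul, one_smul, taylorD_single, taylorD_single, one_smul,
    one_smul]
  exact taylorD_taylorMulElt I J

end TaylorMorse
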